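/- arXiv:2311.16258 — 3 statements merged into one kernel-verified Lean document; each statement's English description precedes it below -/
import Mathlib

section
/- The speculation transformation and the generalized left-corner transformation with the same parameters produce grammars whose full derivation sets are in a structure-preserving bijection: for any weighted CFG G, rule subset P, and symbol subset C, there is a bijection between derivations of SPEC(G, P, C) and derivations of GLCT(G, P, C), over all symbols (original, frozen, and slashed), preserving root label, yield, and weight. -/
/-- Symbols of a grammar: nonterminals `N` or terminals `T`. -/
abbrev GSym (N T : Type) := N ⊕ T

/-- A weighted production rule `X →w α`. -/
abbrev GRule (N T W : Type) := N × List (GSym N T) × W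

/-- A weighted context-free grammar (rules form a bag/set of weighted rules). -/
structure WCFG (N T W : Type) where
  start : N
  rules : Set (GRule N T W)

/-- Derivation trees (with a possible `gap` leaf, used to represent a removed
left corner; well-formed derivations contain no gaps). -/
inductive DTree (N T W : Type) where
  | leaf : T → DTree N T W
  | gap  : DTree N T W
  | node : N → W → List (DTree N T W) → DTree N T W

namespace DTree

variable {N T W : Type}

def label : DTree N T W → Option (GSym N T)
  | leaf a => some (Sum.inr a)
  | gap => none
  | node X _ _ => some (Sum.inl X)

def yield : DTree N T W → List T
  | leaf a => [a]
  | gap => []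
  | node _ _ ts => (ts.attach.map fun t => t.1.yield).flatten
decreasing_by simp only [DTree.node.sizeOf_spec]; have := List.sizeOf_lt_of_mem t.2; omega

def weight [Semiring W] : DTree N T W → W
  | leaf _ => 1
  | gap => 1
  | node _ w ts => w * (ts.attach.map fun t => t.1.weight).prod
decreasing_by simp only [DTree.node.sizeOf_spec]; have := List.sizeOf_lt_of_mem t.2; omega

/-- The list of weights of the rules applied at internal nodes. -/
def ruleWeights : DTree N T W → List W
  | leaf _ => []
  | gap => []
  | node _ w ts => w :: (ts.attach.map fun t => t.1.ruleWeights).flatten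
decreasing_by simp only [DTree.node.sizeOf_spec]; have := List.sizeOf_lt_of_mem t.2; omega

/-- Left-recursion depth: length of the path from the root to the leftmost leaf. -/
def lrDepth : DTree N T W → ℕ
  | leaf _ => 0
  | gap => 0
  | node _ _ [] => 0
  | node _ _ (t1 :: _) => t1.lrDepth + 1

/-- `Sub s t` : `s` is a subtree of `t`. -/
inductive Sub : DTree N T W → DTree N T W → Prop
  | refl (t : DTree N T W) : Sub t t
  | child {s t : DTree N T W} {X w ts} : t ∈ ts → Sub s t → Sub s (node X w ts)

end DTree

variable {N T W : Type}

/-- The children list `ts` together with head `X` and weight `w` matches a rule in `R`. -/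
def RuleApp (R : Set (GRule N T W)) (X : N) (ts : List (DTree N T W)) (w : W) : Prop :=
  ∃ rhs, (X, rhs, w) ∈ R ∧ ts.map DTree.label = rhs.map some

/-- Well-formed derivations of a grammar. -/
inductive DTree.WF (G : WCFG N T W) : DTree N T W → Prop
  | leaf (a : T) : DTree.WF G (DTree.leaf a)
  | node {X : N} {w : W} {ts : List (DTree N T W)} :
      RuleApp G.rules X ts w → (∀ t ∈ ts, DTree.WF G t) →
      DTree.WF G (DTree.node X w ts)

/-- The weighted language of a symbol `α`: the sum of the weights of all
well-formed derivations rooted at `α` whose yield is `x`. -/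
noncomputable def WCFG.lang [Semiring W] (G : WCFG N T W) (α : GSym N T) (x : List T) : W :=
  ∑ᶠ t : {t : DTree N T W // t.WF G ∧ t.label = some α ∧ t.yield = x}, (t : DTree N T W).weight

/-- `α` occurs as the label of some subderivation of some derivation rooted at the start symbol. -/
def WCFG.Useful (G : WCFG N T W) (α : GSym N T) : Prop :=
  ∃ t s : DTree N T W, t.WF G ∧ t.label = some (Sum.inl G.start) ∧ s.Sub t ∧ s.label = some α

/-- Trimming: keep only the rules all of whose symbols are useful. -/
def WCFG.trim (G : WCFG N T W) : WCFG N T W where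
  start := G.start
  rules := {r | r ∈ G.rules ∧ ∀ s ∈ (Sum.inl r.1 :: r.2.1), G.Useful s}

/-- A rule participates in some derivation rooted at the start symbol. -/
def WCFG.RuleUseful (G : WCFG N T W) (r : GRule N T W) : Prop :=
  ∃ t s : DTree N T W, t.WF G ∧ t.label = some (Sum.inl G.start) ∧ s.Sub t ∧
    ∃ ts, s = DTree.node r.1 r.2.2 ts ∧ ts.map DTree.label = r.2.1.map some

/-- Union of weighted languages. -/
def wunion [Semiring W] (L L' : List T → W) : List T → W := fun x => L x + L' x

/-- Concatenation of weighted languages: sum over the two-part factorizations. -/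
def wconc [Semiring W] (L L' : List T → W) : List T → W := fun x =>
  ((List.range (x.length + 1)).map (fun i => L (x.take i) * L' (x.drop i))).sum

/-- The zero weighted language. -/
def wzero [Semiring W] : List T → W := fun _ => 0

open Classical in
/-- The unit weighted language: `1` on the empty string, `0` elsewhere. -/
noncomputable def wone [Semiring W] : List T → W := fun x => if x = [] then 1 else 0

/-- Nonterminals of the output of the (generalized) left-corner / speculation
transformations: originals `X`, frozen `X̃`, and slashed `α/β`. -/
inductive LCNT (N T : Type) where
  | orig : N → LCNT N T
  | frozen : N → LCNT N T
  | slash : GSym N T → GSym N T → LCNT N T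

/-- Embedding of original symbols into the transformed grammar's symbols. -/
def emb : GSym N T → GSym (LCNT N T) T := Sum.map LCNT.orig id

/-- The frozen version `α̃` of a symbol (terminals are left unchanged). -/
def frz : GSym N T → GSym (LCNT N T) T
  | Sum.inl X => Sum.inl (LCNT.frozen X)
  | Sum.inr a => Sum.inr a

/-- The generalized left-corner transformation GLCT(G, P, C). -/
def GLCT (G : WCFG N T W) [One W] (P : Set (GRule N T W)) (C : Set (GSym N T)) :
    WCFG (LCNT N T) T W where
  start := LCNT.orig G.start
  rules :=
    {r | ∃ X : N, (Sum.inl X : GSym N T) ∉ C ∧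
          r = (LCNT.orig X, [Sum.inl (LCNT.frozen X)], (1 : W))} ∪
    {r | ∃ (X : N) (α : GSym N T), α ∈ C ∧
          r = (LCNT.orig X, [frz α, Sum.inl (LCNT.slash (Sum.inl X) α)], (1 : W))} ∪
    {r | ∃ α : GSym N T, r = (LCNT.slash α α, [], (1 : W))} ∪
    {r | ∃ (X : N) (α : GSym N T) (β : List (GSym N T)) (w : W) (Y : N),
          (X, α :: β, w) ∈ P ∧
          r = (LCNT.slash (Sum.inl Y) α,
               β.map emb ++ [Sum.inl (LCNT.slash (Sum.inl Y) (Sum.inl X))], w)} ∪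
    {r | ∃ (X : N) (rhs : List (GSym N T)) (w : W),
          (X, rhs, w) ∈ G.rules ∧ (X, rhs, w) ∉ P ∧ r = (LCNT.frozen X, rhs.map emb, w)} ∪
    {r | ∃ (X : N) (α : GSym N T) (β : List (GSym N T)) (w : W),
          (X, α :: β, w) ∈ P ∧ α ∉ C ∧ r = (LCNT.frozen X, frz α :: β.map emb, w)}

/-- The speculation transformation SPEC(G, P, C). -/
def SPEC (G : WCFG N T W) [One W] (P : Set (GRule N T W)) (C : Set (GSym N T)) :
    WCFG (LCNT N T) T W where
  start := LCNT.orig G.start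
  rules :=
    {r | ∃ X : N, (Sum.inl X : GSym N T) ∉ C ∧
          r = (LCNT.orig X, [Sum.inl (LCNT.frozen X)], (1 : W))} ∪
    {r | ∃ (X : N) (α : GSym N T), α ∈ C ∧
          r = (LCNT.orig X, [frz α, Sum.inl (LCNT.slash (Sum.inl X) α)], (1 : W))} ∪
    {r | ∃ α : GSym N T, r = (LCNT.slash α α, [], (1 : W))} ∪
    {r | ∃ (X : N) (α : GSym N T) (β : List (GSym N T)) (w : W) (Y : GSym N T),
          (X, α :: β, w) ∈ P ∧
          r = (LCNT.slash (Sum.inl X) Y,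
               Sum.inl (LCNT.slash α Y) :: β.map emb, w)} ∪
    {r | ∃ (X : N) (rhs : List (GSym N T)) (w : W),
          (X, rhs, w) ∈ G.rules ∧ (X, rhs, w) ∉ P ∧ r = (LCNT.frozen X, rhs.map emb, w)} ∪
    {r | ∃ (X : N) (α : GSym N T) (β : List (GSym N T)) (w : W),
          (X, α :: β, w) ∈ P ∧ α ∉ C ∧ r = (LCNT.frozen X, frz α :: β.map emb, w)}

/-- Edge relation of the left-recursion graph restricted to a rule set `R`:
an edge from `X` to the leftmost right-hand-side symbol of a rule in `R`. -/
def EdgeRel (R : Set (GRule N T W)) (a b : GSym N T) : Prop :=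
  ∃ (X : N) (rhs : List (GSym N T)) (w : W),
    a = Sum.inl X ∧ (X, rhs, w) ∈ R ∧ rhs.head? = some b

/-- A rule is left-recursive if its edge lies on a cycle of the left-recursion graph. -/
def LeftRecRule (G : WCFG N T W) (r : GRule N T W) : Prop :=
  ∃ b, r.2.1.head? = some b ∧ Relation.ReflTransGen (EdgeRel G.rules) b (Sum.inl r.1)

/-- `bottoms(P)`: the symbols that may appear at the bottom of a spine. -/
def bottoms (G : WCFG N T W) (P : Set (GRule N T W)) : Set (GSym N T) :=
  {α | ((∃ a : T, α = Sum.inr a) ∨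
        ∃ (X : N) (rhs : List (GSym N T)) (w : W),
          α = Sum.inl X ∧ (X, rhs, w) ∈ G.rules ∧ (X, rhs, w) ∉ P ∧ rhs ≠ []) ∧
       (∃ (X : N) (rhs : List (GSym N T)) (w : W), (X, rhs, w) ∈ P ∧ rhs.head? = some α)}

/-!
SPEC and GLCT share every rule except the recursive slashed ones, so their derivations can
differ only inside slashed subtrees. A SPEC derivation of `X/Y` is a left spine of `P`-rules
`X → α₁ β₁, α₁ → α₂ β₂, …, αₖ₋₁ → Y βₖ` read from the top, every node keeping the
denominator `Y`, and it ends in `Y/Y → ε`. A GLCT derivation of `X/Y` is a right spine using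
the same rules from the bottom, every node keeping the numerator `X`, and it ends in `X/X → ε`.
Reversing every spine, while translating the side subtrees `βᵢ` recursively, is therefore a
bijection. The side yields keep their left-to-right order, and the weight is the same product
of rule weights in another order, which is where commutativity of the semiring is used.
-/

namespace DTree

variable {N T W : Type}

lemma sizeOf_lt_sizeOf_node [SizeOf N] [SizeOf T] [SizeOf W] {t : DTree N T W} {X : N} {w : W}
    {ts : List (DTree N T W)} (h : t ∈ ts) : sizeOf t < sizeOf (node X w ts) := by
  have := List.sizeOf_lt_of_mem h
  simp only [node.sizeOf_spec]
  omega

@[simp] lemma yield_node (X : N) (w : W) (ts : List (DTree N T W)) :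
    (node X w ts).yield = (ts.map yield).flatten := by
  rw [yield, List.attach_map_val]

@[simp] lemma weight_node [Semiring W] (X : N) (w : W) (ts : List (DTree N T W)) :
    (node X w ts).weight = w * (ts.map weight).prod := by
  rw [weight, List.attach_map_val]

lemma eq_node_of_label {t : DTree N T W} {X : N} (h : t.label = some (.inl X)) :
    ∃ w ts, t = node X w ts := by
  cases t <;> simp_all [label]

lemma WF.of_node {G : WCFG N T W} {X : N} {w : W} {ts : List (DTree N T W)}
    (h : (DTree.node X w ts).WF G) : RuleApp G.rules X ts w ∧ ∀ t ∈ ts, t.WF G := by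
  cases h with | node hr hts => exact ⟨hr, hts⟩

variable [Semiring W]

def SameLabelYieldWeight (s t : DTree N T W) : Prop :=
  s.label = t.label ∧ s.yield = t.yield ∧ s.weight = t.weight

lemma map_comp_eq_of_sameLabelYieldWeight {f : DTree N T W → DTree N T W}
    {ts : List (DTree N T W)} (h : ∀ t ∈ ts, SameLabelYieldWeight (f t) t) :
    ts.map (label ∘ f) = ts.map label ∧ ts.map (yield ∘ f) = ts.map yield ∧
      ts.map (weight ∘ f) = ts.map weight :=
  ⟨List.map_congr_left fun t ht => (h t ht).1, List.map_congr_left fun t ht => (h t ht).2.1,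
    List.map_congr_left fun t ht => (h t ht).2.2⟩

lemma WF.map_children {G G' : WCFG N T W} {f : DTree N T W → DTree N T W} {X : N} {w : W}
    {ts : List (DTree N T W)} (hrule : ∀ rhs, (X, rhs, w) ∈ G.rules → (X, rhs, w) ∈ G'.rules)
    (h : (DTree.node X w ts).WF G) (hf : ∀ t ∈ ts, (f t).WF G' ∧ SameLabelYieldWeight (f t) t) :
    (DTree.node X w (ts.map f)).WF G' ∧
      SameLabelYieldWeight (DTree.node X w (ts.map f)) (DTree.node X w ts) := by
  obtain ⟨⟨rhs, hmem, hlab⟩, -⟩ := h.of_node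
  obtain ⟨hl, hy, hw⟩ := map_comp_eq_of_sameLabelYieldWeight fun t ht => (hf t ht).2
  refine ⟨.node ⟨rhs, hrule rhs hmem, by rw [List.map_map, hl, hlab]⟩ ?_, rfl, ?_, ?_⟩
  · simpa using fun t ht => (hf t ht).1
  · simp [hy]
  · simp [hw]

end DTree

section Rules

variable {N T W : Type} [One W] {G : WCFG N T W} {P : Set (GRule N T W)} {C : Set (GSym N T)}
  {a b y : GSym N T} {rhs : List (GSym (LCNT N T) T)} {w : W}

lemma SPEC.slash_self_mem (a : GSym N T) :
    ((.slash a a, [], 1) : GRule (LCNT N T) T W) ∈ (SPEC G P C).rules := by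
  simp only [SPEC, Set.mem_union, Set.mem_ofPred_eq]
  exact .inl <| .inl <| .inl <| .inr ⟨a, rfl⟩

lemma GLCT.slash_self_mem (a : GSym N T) :
    ((.slash a a, [], 1) : GRule (LCNT N T) T W) ∈ (GLCT G P C).rules := by
  simp only [GLCT, Set.mem_union, Set.mem_ofPred_eq]
  exact .inl <| .inl <| .inl <| .inr ⟨a, rfl⟩

lemma SPEC.slash_mem {X : N} {α : GSym N T} {β : List (GSym N T)} (y : GSym N T)
    (h : (X, α :: β, w) ∈ P) :
    ((.slash (.inl X) y, .inl (.slash α y) :: β.map emb, w) : GRule (LCNT N T) T W) ∈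
      (SPEC G P C).rules := by
  simp only [SPEC, Set.mem_union, Set.mem_ofPred_eq]
  exact .inl <| .inl <| .inr ⟨X, α, β, w, y, h, rfl⟩

lemma GLCT.slash_mem {X : N} {α : GSym N T} {β : List (GSym N T)} (Y : N)
    (h : (X, α :: β, w) ∈ P) :
    ((.slash (.inl Y) α, β.map emb ++ [.inl (.slash (.inl Y) (.inl X))], w) :
      GRule (LCNT N T) T W) ∈ (GLCT G P C).rules := by
  simp only [GLCT, Set.mem_union, Set.mem_ofPred_eq]
  exact .inl <| .inl <| .inr ⟨X, α, β, w, Y, h, rfl⟩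

lemma SPEC.slash_mem_cases
    (h : ((.slash a y, rhs, w) : GRule (LCNT N T) T W) ∈ (SPEC G P C).rules) :
    (a = y ∧ rhs = [] ∧ w = 1) ∨
      ∃ X α β, a = .inl X ∧ (X, α :: β, w) ∈ P ∧ rhs = .inl (.slash α y) :: β.map emb := by
  simp only [SPEC, Set.mem_union, Set.mem_ofPred_eq, Prod.mk.injEq] at h
  aesop

lemma GLCT.slash_mem_cases
    (h : ((.slash a b, rhs, w) : GRule (LCNT N T) T W) ∈ (GLCT G P C).rules) :
    (a = b ∧ rhs = [] ∧ w = 1) ∨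
      ∃ X Y β, a = .inl Y ∧ (X, b :: β, w) ∈ P ∧
        rhs = β.map emb ++ [.inl (.slash a (.inl X))] := by
  simp only [GLCT, Set.mem_union, Set.mem_ofPred_eq, Prod.mk.injEq] at h
  aesop

lemma SPEC.mem_iff_GLCT_mem {L : LCNT N T} (hL : ∀ a b, L ≠ .slash a b) :
    ((L, rhs, w) : GRule (LCNT N T) T W) ∈ (SPEC G P C).rules ↔
      ((L, rhs, w) : GRule (LCNT N T) T W) ∈ (GLCT G P C).rules := by
  simp only [SPEC, GLCT, Set.mem_union, Set.mem_ofPred_eq, Prod.mk.injEq]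
  aesop

end Rules

namespace DTree

section SlashTrees

variable {N T W : Type} [One W] {G : WCFG N T W} {P : Set (GRule N T W)} {C : Set (GSym N T)}
  {a b y : GSym N T} {w : W} {ts : List (DTree (LCNT N T) T W)}

lemma wf_slash_self_SPEC (a : GSym N T) :
    (node (.slash a a) 1 [] : DTree (LCNT N T) T W).WF (SPEC G P C) :=
  .node ⟨[], SPEC.slash_self_mem a, rfl⟩ (by simp)

lemma wf_slash_self_GLCT (a : GSym N T) :
    (node (.slash a a) 1 [] : DTree (LCNT N T) T W).WF (GLCT G P C) :=
  .node ⟨[], GLCT.slash_self_mem a, rfl⟩ (by simp)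

lemma WF.slash_cases_SPEC (h : (DTree.node (.slash a y) w ts).WF (SPEC G P C)) :
    (a = y ∧ w = 1 ∧ ts = []) ∨
      ∃ X α β v us rest, a = .inl X ∧ (X, α :: β, w) ∈ P ∧
        ts = DTree.node (.slash α y) v us :: rest ∧ rest.map label = (β.map emb).map some := by
  obtain ⟨⟨rhs, hmem, hlab⟩, -⟩ := h.of_node
  rcases SPEC.slash_mem_cases hmem with ⟨rfl, rfl, rfl⟩ | ⟨X, α, β, rfl, hP, rfl⟩
  · exact .inl ⟨rfl, rfl, List.map_eq_nil_iff.mp hlab⟩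
  · obtain _ | ⟨t, rest⟩ := ts
    · simp at hlab
    · simp only [List.map_cons, List.cons.injEq] at hlab
      obtain ⟨v, us, rfl⟩ := eq_node_of_label hlab.1
      exact .inr ⟨X, α, β, v, us, rest, rfl, hP, rfl, hlab.2⟩

lemma WF.slash_cases_GLCT (h : (DTree.node (.slash a b) w ts).WF (GLCT G P C)) :
    (a = b ∧ w = 1 ∧ ts = []) ∨
      ∃ X Y β v us init, a = .inl Y ∧ (X, b :: β, w) ∈ P ∧
        ts = init ++ [DTree.node (.slash a (.inl X)) v us] ∧
          init.map label = (β.map emb).map some := by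
  obtain ⟨⟨rhs, hmem, hlab⟩, -⟩ := h.of_node
  rcases GLCT.slash_mem_cases hmem with ⟨rfl, rfl, rfl⟩ | ⟨X, Y, β, rfl, hP, rfl⟩
  · exact .inl ⟨rfl, rfl, List.map_eq_nil_iff.mp hlab⟩
  · rw [List.map_append] at hlab
    obtain ⟨init, l, rfl, hinit, hl⟩ := List.map_eq_append_iff.mp hlab
    obtain ⟨t, rfl, ht⟩ := List.map_eq_singleton_iff.mp hl
    obtain ⟨v, us, rfl⟩ := eq_node_of_label ht
    exact .inr ⟨X, Y, β, v, us, init, rfl, hP, rfl, hinit⟩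

lemma wf_slash_SPEC {X : N} {α : GSym N T} {β : List (GSym N T)} (hP : (X, α :: β, w) ∈ P)
    {c : DTree (LCNT N T) T W} (hc : c.WF (SPEC G P C))
    (hclab : c.label = some (.inl (.slash α y)))
    (hts : ∀ t ∈ ts, t.WF (SPEC G P C)) (hlab : ts.map label = (β.map emb).map some) :
    (node (.slash (.inl X) y) w (c :: ts)).WF (SPEC G P C) :=
  .node ⟨_, SPEC.slash_mem y hP, by simp [hclab, hlab]⟩ (by simpa [hc] using hts)

lemma wf_slash_GLCT {X : N} {α : GSym N T} {β : List (GSym N T)} (Y : N)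
    (hP : (X, α :: β, w) ∈ P)
    (hts : ∀ t ∈ ts, t.WF (GLCT G P C)) (hlab : ts.map label = (β.map emb).map some)
    {c : DTree (LCNT N T) T W} (hc : c.WF (GLCT G P C))
    (hclab : c.label = some (.inl (.slash (.inl Y) (.inl X)))) :
    (node (.slash (.inl Y) α) w (ts ++ [c])).WF (GLCT G P C) :=
  .node ⟨_, GLCT.slash_mem Y hP, by simp [hclab, hlab]⟩
    (by simpa [or_imp, forall_and, hc] using hts)

end SlashTrees

section Translation

variable {N T W : Type} [One W]

/- `spine top t acc` takes the rules off the SPEC spine `t` from the top and stacks them on the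
GLCT spine `acc` (numerator `top`), like reversing a list onto an accumulator. -/
def specToGlct : DTree (LCNT N T) T W → DTree (LCNT N T) T W
  | node (.slash a b) w ts => spine a (node (.slash a b) w ts) (node (.slash a a) 1 [])
  | node X w ts => node X w (ts.attach.map fun t => specToGlct t.1)
  | t => t
termination_by t => (sizeOf t, 1)
decreasing_by
  · exact Prod.Lex.right _ Nat.zero_lt_one
  · exact Prod.Lex.left _ _ (sizeOf_lt_sizeOf_node t.2)
where
  spine (top : GSym N T) : DTree (LCNT N T) T W → DTree (LCNT N T) T W → DTree (LCNT N T) T W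
    | node (.slash _ _) w (node (.slash α y) v us :: ts), acc =>
        spine top (node (.slash α y) v us)
          (node (.slash top α) w ((ts.attach.map fun t => specToGlct t.1) ++ [acc]))
    | _, acc => acc
  termination_by t => (sizeOf t, 0)
  decreasing_by
    · exact Prod.Lex.left _ _ (sizeOf_lt_sizeOf_node (List.mem_cons_of_mem _ t.2))
    · exact Prod.Lex.left _ _ (sizeOf_lt_sizeOf_node List.mem_cons_self)

def glctToSpec : DTree (LCNT N T) T W → DTree (LCNT N T) T W
  | node (.slash a b) w ts => spine b (node (.slash a b) w ts) (node (.slash b b) 1 [])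
  | node X w ts => node X w (ts.attach.map fun t => glctToSpec t.1)
  | t => t
termination_by t => (sizeOf t, 1)
decreasing_by
  · exact Prod.Lex.right _ Nat.zero_lt_one
  · exact Prod.Lex.left _ _ (sizeOf_lt_sizeOf_node t.2)
where
  spine (bot : GSym N T) : DTree (LCNT N T) T W → DTree (LCNT N T) T W → DTree (LCNT N T) T W
    | node (.slash _ _) w ts, acc =>
        match ts.attach.getLast? with
        | some ⟨node (.slash a X) v us, _⟩ =>
            spine bot (node (.slash a X) v us)
              (node (.slash X bot) w (acc :: ts.dropLast.attach.map fun t => glctToSpec t.1))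
        | _ => acc
    | _, acc => acc
  termination_by t => (sizeOf t, 0)
  decreasing_by
    · exact Prod.Lex.left _ _ (sizeOf_lt_sizeOf_node (List.dropLast_subset _ t.2))
    · exact Prod.Lex.left _ _ (sizeOf_lt_sizeOf_node ‹_›)

variable {a b top bot α y X : GSym N T} {w v : W} {ts us : List (DTree (LCNT N T) T W)}

lemma specToGlct_leaf (x : T) : specToGlct (leaf x : DTree (LCNT N T) T W) = leaf x := by
  rw [specToGlct] <;> simp

lemma specToGlct_slash :
    specToGlct (node (.slash a b) w ts) =
      specToGlct.spine a (node (.slash a b) w ts) (node (.slash a a) 1 []) := by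
  rw [specToGlct]

lemma specToGlct_node {L : LCNT N T} (hL : ∀ a b, L ≠ .slash a b) :
    specToGlct (node L w ts) = node L w (ts.map specToGlct) := by
  cases L with
  | slash a b => exact absurd rfl (hL a b)
  | _ => rw [specToGlct] <;> simp

lemma specToGlct.spine_cons (acc : DTree (LCNT N T) T W) :
    spine top (node (.slash a b) w (node (.slash α y) v us :: ts)) acc =
      spine top (node (.slash α y) v us) (node (.slash top α) w (ts.map specToGlct ++ [acc])) := by
  rw [spine, List.attach_map_val]

lemma specToGlct.spine_nil (acc : DTree (LCNT N T) T W) :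
    spine top (node (.slash a b) w []) acc = acc := by
  rw [spine]; simp

lemma glctToSpec_leaf (x : T) : glctToSpec (leaf x : DTree (LCNT N T) T W) = leaf x := by
  rw [glctToSpec] <;> simp

lemma glctToSpec_slash :
    glctToSpec (node (.slash a b) w ts) =
      glctToSpec.spine b (node (.slash a b) w ts) (node (.slash b b) 1 []) := by
  rw [glctToSpec]

lemma glctToSpec_node {L : LCNT N T} (hL : ∀ a b, L ≠ .slash a b) :
    glctToSpec (node L w ts) = node L w (ts.map glctToSpec) := by
  cases L with
  | slash a b => exact absurd rfl (hL a b)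
  | _ => rw [glctToSpec] <;> simp

lemma glctToSpec.spine_concat (acc : DTree (LCNT N T) T W) :
    spine bot (node (.slash a b) w (ts ++ [node (.slash y X) v us])) acc =
      spine bot (node (.slash y X) v us) (node (.slash X bot) w (acc :: ts.map glctToSpec)) := by
  rw [spine]
  split
  · next h =>
    simp only [List.getLast?_attach, List.getLast?_concat, Option.pbind_some, Option.some.injEq,
      Subtype.mk.injEq, node.injEq, LCNT.slash.injEq] at h
    obtain ⟨⟨rfl, rfl⟩, rfl, rfl⟩ := h
    rw [List.dropLast_concat, List.attach_map_val]
  · next h => exact (h y X v us (by simp) (by simp [List.getLast?_attach])).elim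

lemma glctToSpec.spine_nil (acc : DTree (LCNT N T) T W) :
    spine bot (node (.slash a b) w []) acc = acc := by
  rw [spine]
  split <;> simp_all

end Translation

section Bijection

variable {N T W : Type} [CommSemiring W] {G : WCFG N T W} {P : Set (GRule N T W)}
  {C : Set (GSym N T)}

theorem WF.specToGlct_wf_sameLabelYieldWeight {t : DTree (LCNT N T) T W}
    (ht : t.WF (SPEC G P C)) :
    t.specToGlct.WF (GLCT G P C) ∧ SameLabelYieldWeight t.specToGlct t := by
  cases t with
  | leaf a => rw [specToGlct_leaf]; exact ⟨.leaf a, rfl, rfl, rfl⟩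
  | gap => cases ht
  | node L w ts =>
    cases L with
    | slash a y =>
      rw [specToGlct_slash]
      rcases ht.slash_cases_SPEC with ⟨rfl, rfl, rfl⟩ | ⟨X, -, -, -, -, -, rfl, -⟩
      · rw [specToGlct.spine_nil]
        exact ⟨wf_slash_self_GLCT a, rfl, rfl, by simp⟩
      · obtain ⟨hwf, hlab, hy, hw⟩ := spine ht (wf_slash_self_GLCT (.inl X)) rfl
        exact ⟨hwf, hlab, by simp [hy], by simp [hw]⟩
    | _ =>
      rw [specToGlct_node (by simp)]
      exact ht.map_children (fun _ => (SPEC.mem_iff_GLCT_mem (by simp)).mp)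
        fun t h => WF.specToGlct_wf_sameLabelYieldWeight (ht.of_node.2 t h)
termination_by (sizeOf t, 1)
decreasing_by
  all_goals subst_vars
  all_goals first
    | exact Prod.Lex.right _ Nat.zero_lt_one
    | exact Prod.Lex.left _ _ (sizeOf_lt_sizeOf_node (by simp [*]))
where
  spine {a y : GSym N T} {w : W} {ts : List (DTree (LCNT N T) T W)} {Y : N}
      {acc : DTree (LCNT N T) T W} (ht : (DTree.node (.slash a y) w ts).WF (SPEC G P C))
      (hacc : acc.WF (GLCT G P C)) (hacclab : acc.label = some (.inl (.slash (.inl Y) a))) :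
      let g := specToGlct.spine (.inl Y) (DTree.node (.slash a y) w ts) acc
      g.WF (GLCT G P C) ∧ g.label = some (.inl (.slash (.inl Y) y)) ∧
        g.yield = (DTree.node (.slash a y) w ts).yield ++ acc.yield ∧
        g.weight = (DTree.node (.slash a y) w ts).weight * acc.weight := by
    have hts := ht.of_node.2
    rcases ht.slash_cases_SPEC with ⟨rfl, rfl, rfl⟩ | ⟨X, α, β, v, us, rest, rfl, hP, rfl, hlab⟩
    · rw [specToGlct.spine_nil]
      exact ⟨hacc, hacclab, by simp, by simp⟩
    · rw [specToGlct.spine_cons]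
      have hrest (r) (hr : r ∈ rest) :
          r.specToGlct.WF (GLCT G P C) ∧ SameLabelYieldWeight r.specToGlct r :=
        WF.specToGlct_wf_sameLabelYieldWeight (hts r (List.mem_cons_of_mem _ hr))
      obtain ⟨hl, hy, hw⟩ := map_comp_eq_of_sameLabelYieldWeight fun r hr => (hrest r hr).2
      have hacc' := wf_slash_GLCT Y hP (List.forall_mem_map.mpr fun r hr => (hrest r hr).1)
        (by rw [List.map_map, hl, hlab]) hacc hacclab
      obtain ⟨hwf, hlab', hy', hw'⟩ := spine (hts _ List.mem_cons_self) hacc' rfl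
      refine ⟨hwf, hlab', ?_, ?_⟩
      · simp [hy', hy]
      · simp only [hw', weight_node, List.map_append, List.map_map, hw, List.prod_append,
          List.map_cons, List.prod_cons, List.map_nil, List.prod_nil]
        ring
  termination_by (sizeOf (DTree.node (.slash a y) w ts), 0)
  decreasing_by
    all_goals subst_vars
    all_goals exact Prod.Lex.left _ _ (sizeOf_lt_sizeOf_node (by simp [*]))

theorem WF.glctToSpec_wf_sameLabelYieldWeight {t : DTree (LCNT N T) T W}
    (ht : t.WF (GLCT G P C)) :
    t.glctToSpec.WF (SPEC G P C) ∧ SameLabelYieldWeight t.glctToSpec t := by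
  cases t with
  | leaf a => rw [glctToSpec_leaf]; exact ⟨.leaf a, rfl, rfl, rfl⟩
  | gap => cases ht
  | node L w ts =>
    cases L with
    | slash a b =>
      rw [glctToSpec_slash]
      obtain ⟨hwf, hlab, hy, hw⟩ := spine ht (wf_slash_self_SPEC b) rfl
      exact ⟨hwf, hlab, by simp [hy], by simp [hw]⟩
    | _ =>
      rw [glctToSpec_node (by simp)]
      exact ht.map_children (fun _ => (SPEC.mem_iff_GLCT_mem (by simp)).mpr)
        fun t h => WF.glctToSpec_wf_sameLabelYieldWeight (ht.of_node.2 t h)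
termination_by (sizeOf t, 1)
decreasing_by
  all_goals subst_vars
  all_goals first
    | exact Prod.Lex.right _ Nat.zero_lt_one
    | exact Prod.Lex.left _ _ (sizeOf_lt_sizeOf_node (by simp [*]))
where
  spine {a b y : GSym N T} {w : W} {ts : List (DTree (LCNT N T) T W)}
      {acc : DTree (LCNT N T) T W} (ht : (DTree.node (.slash a b) w ts).WF (GLCT G P C))
      (hacc : acc.WF (SPEC G P C)) (hacclab : acc.label = some (.inl (.slash b y))) :
      let s := glctToSpec.spine y (DTree.node (.slash a b) w ts) acc
      s.WF (SPEC G P C) ∧ s.label = some (.inl (.slash a y)) ∧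
        s.yield = acc.yield ++ (DTree.node (.slash a b) w ts).yield ∧
        s.weight = acc.weight * (DTree.node (.slash a b) w ts).weight := by
    have hts := ht.of_node.2
    rcases ht.slash_cases_GLCT with ⟨rfl, rfl, rfl⟩ | ⟨X, Y, β, v, us, init, rfl, hP, rfl, hlab⟩
    · rw [glctToSpec.spine_nil]
      exact ⟨hacc, hacclab, by simp, by simp⟩
    · rw [glctToSpec.spine_concat]
      have hinit (r) (hr : r ∈ init) :
          r.glctToSpec.WF (SPEC G P C) ∧ SameLabelYieldWeight r.glctToSpec r :=
        WF.glctToSpec_wf_sameLabelYieldWeight (hts r (List.mem_append_left _ hr))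
      obtain ⟨hl, hy, hw⟩ := map_comp_eq_of_sameLabelYieldWeight fun r hr => (hinit r hr).2
      have hacc' := wf_slash_SPEC hP hacc hacclab
        (List.forall_mem_map.mpr fun r hr => (hinit r hr).1) (by rw [List.map_map, hl, hlab])
      obtain ⟨hwf, hlab', hy', hw'⟩ := spine (hts _ List.mem_concat_self) hacc' rfl
      refine ⟨hwf, hlab', ?_, ?_⟩
      · simp [hy', hy]
      · simp only [hw', weight_node, List.map_append, List.map_map, hw, List.prod_append,
          List.map_cons, List.prod_cons, List.map_nil, List.prod_nil]
        ring
  termination_by (sizeOf (DTree.node (.slash a b) w ts), 0)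
  decreasing_by
    all_goals subst_vars
    all_goals exact Prod.Lex.left _ _ (sizeOf_lt_sizeOf_node (by simp [*]))

/- The `spine` lemmas of the two inverse laws are the tree analogue of
`reverseAux (reverseAux l acc) [] = reverseAux acc l`. -/
theorem WF.glctToSpec_specToGlct {t : DTree (LCNT N T) T W} (ht : t.WF (SPEC G P C)) :
    t.specToGlct.glctToSpec = t := by
  cases t with
  | leaf a => rw [specToGlct_leaf, glctToSpec_leaf]
  | gap => cases ht
  | node L w ts =>
    cases L with
    | slash a y =>
      obtain ⟨w', cs, hg⟩ := eq_node_of_label ht.specToGlct_wf_sameLabelYieldWeight.2.1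
      rw [hg, glctToSpec_slash, ← hg, specToGlct_slash, spine ht rfl, glctToSpec.spine_nil]
    | _ =>
      rw [specToGlct_node (by simp), glctToSpec_node (by simp), List.map_map]
      exact congrArg _ <| (List.map_congr_left fun t h =>
        WF.glctToSpec_specToGlct (ht.of_node.2 t h)).trans (List.map_id _)
termination_by (sizeOf t, 1)
decreasing_by
  all_goals subst_vars
  all_goals first
    | exact Prod.Lex.right _ Nat.zero_lt_one
    | exact Prod.Lex.left _ _ (sizeOf_lt_sizeOf_node (by simp [*]))
where
  spine {a y top : GSym N T} {w : W} {ts : List (DTree (LCNT N T) T W)}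
      {acc : DTree (LCNT N T) T W} (ht : (DTree.node (.slash a y) w ts).WF (SPEC G P C))
      (hacclab : acc.label = some (.inl (.slash top a))) :
      glctToSpec.spine y (specToGlct.spine top (DTree.node (.slash a y) w ts) acc)
          (DTree.node (.slash y y) 1 []) =
        glctToSpec.spine y acc (DTree.node (.slash a y) w ts) := by
    have hts := ht.of_node.2
    rcases ht.slash_cases_SPEC with ⟨rfl, rfl, rfl⟩ | ⟨X, α, β, v, us, rest, rfl, -, rfl, -⟩
    · rw [specToGlct.spine_nil]
    · rw [specToGlct.spine_cons, spine (hts _ List.mem_cons_self) rfl]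
      obtain ⟨v', cs, rfl⟩ := eq_node_of_label hacclab
      have hrest : rest.map (glctToSpec ∘ specToGlct) = rest :=
        (List.map_congr_left (g := id) fun r hr =>
          WF.glctToSpec_specToGlct (hts r (List.mem_cons_of_mem _ hr))).trans (List.map_id _)
      rw [glctToSpec.spine_concat, List.map_map, hrest]
  termination_by (sizeOf (DTree.node (.slash a y) w ts), 0)
  decreasing_by
    all_goals subst_vars
    all_goals exact Prod.Lex.left _ _ (sizeOf_lt_sizeOf_node (by simp [*]))

theorem WF.specToGlct_glctToSpec {t : DTree (LCNT N T) T W} (ht : t.WF (GLCT G P C)) :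
    t.glctToSpec.specToGlct = t := by
  cases t with
  | leaf a => rw [glctToSpec_leaf, specToGlct_leaf]
  | gap => cases ht
  | node L w ts =>
    cases L with
    | slash a b =>
      obtain ⟨w', cs, hs⟩ := eq_node_of_label ht.glctToSpec_wf_sameLabelYieldWeight.2.1
      rw [hs, specToGlct_slash, ← hs, glctToSpec_slash, spine ht rfl, specToGlct.spine_nil]
    | _ =>
      rw [glctToSpec_node (by simp), specToGlct_node (by simp), List.map_map]
      exact congrArg _ <| (List.map_congr_left fun t h =>
        WF.specToGlct_glctToSpec (ht.of_node.2 t h)).trans (List.map_id _)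
termination_by (sizeOf t, 1)
decreasing_by
  all_goals subst_vars
  all_goals first
    | exact Prod.Lex.right _ Nat.zero_lt_one
    | exact Prod.Lex.left _ _ (sizeOf_lt_sizeOf_node (by simp [*]))
where
  spine {a b y : GSym N T} {w : W} {ts : List (DTree (LCNT N T) T W)}
      {acc : DTree (LCNT N T) T W} (ht : (DTree.node (.slash a b) w ts).WF (GLCT G P C))
      (hacclab : acc.label = some (.inl (.slash b y))) :
      specToGlct.spine a (glctToSpec.spine y (DTree.node (.slash a b) w ts) acc)
          (DTree.node (.slash a a) 1 []) =
        specToGlct.spine a acc (DTree.node (.slash a b) w ts) := by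
    have hts := ht.of_node.2
    rcases ht.slash_cases_GLCT with ⟨rfl, rfl, rfl⟩ | ⟨X, Y, β, v, us, init, rfl, -, rfl, -⟩
    · rw [glctToSpec.spine_nil]
    · rw [glctToSpec.spine_concat, spine (hts _ List.mem_concat_self) rfl]
      obtain ⟨v', cs, rfl⟩ := eq_node_of_label hacclab
      have hinit : init.map (specToGlct ∘ glctToSpec) = init :=
        (List.map_congr_left (g := id) fun r hr =>
          WF.specToGlct_glctToSpec (hts r (List.mem_append_left _ hr))).trans (List.map_id _)
      rw [specToGlct.spine_cons, List.map_map, hinit]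
  termination_by (sizeOf (DTree.node (.slash a b) w ts), 0)
  decreasing_by
    all_goals subst_vars
    all_goals exact Prod.Lex.left _ _ (sizeOf_lt_sizeOf_node (by simp [*]))

variable (G P C) in
def specGlctEquiv :
    {t : DTree (LCNT N T) T W // t.WF (SPEC G P C)} ≃
      {t : DTree (LCNT N T) T W // t.WF (GLCT G P C)} where
  toFun t := ⟨t.1.specToGlct, t.2.specToGlct_wf_sameLabelYieldWeight.1⟩
  invFun t := ⟨t.1.glctToSpec, t.2.glctToSpec_wf_sameLabelYieldWeight.1⟩
  left_inv t := Subtype.ext t.2.glctToSpec_specToGlct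
  right_inv t := Subtype.ext t.2.specToGlct_glctToSpec

end Bijection

end DTree

theorem SPEC_GLCT_bijective_equivalence_general [CommSemiring W]
    (G : WCFG N T W) (P : Set (GRule N T W)) (C : Set (GSym N T)) :
    ∃ φ : {t : DTree (LCNT N T) T W // t.WF (SPEC G P C)} ≃
          {t : DTree (LCNT N T) T W // t.WF (GLCT G P C)},
      ∀ t, (φ t : DTree (LCNT N T) T W).label = t.1.label ∧
           (φ t : DTree (LCNT N T) T W).yield = t.1.yield ∧
           (φ t : DTree (LCNT N T) T W).weight = t.1.weight :=
  ⟨DTree.specGlctEquiv G P C, fun t => t.2.specToGlct_wf_sameLabelYieldWeight.2⟩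

/-- Speculation and GLCT (with the same parameters) have fully bijectively
equivalent derivation sets, over all symbols, preserving root label, yield,
and weight. -/
theorem SPEC_GLCT_bijective_equivalence [CommSemiring W]
    (G : WCFG N T W) (P : Set (GRule N T W)) (C : Set (GSym N T))
    (hP : P ⊆ G.rules) (hPnn : ∀ r ∈ P, r.2.1 ≠ []) :
    ∃ φ : {t : DTree (LCNT N T) T W // t.WF (SPEC G P C)} ≃
          {t : DTree (LCNT N T) T W // t.WF (GLCT G P C)},
      ∀ t, (φ t : DTree (LCNT N T) T W).label = t.1.label ∧
           (φ t : DTree (LCNT N T) T W).yield = t.1.yield ∧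
           (φ t : DTree (LCNT N T) T W).weight = t.1.weight :=
  SPEC_GLCT_bijective_equivalence_general G P C
end

section
/- The basic left-corner transformation eliminates left recursion: if G is a context-free grammar with no unary and no nullary rules, then trim(GLCT(G, R, N ∪ Σ)) (taking all rules as left-corner recognition rules and all symbols as left-corner recognition symbols) is not left-recursive. -/
variable {N T W : Type}

/-! With every rule and every symbol used for left-corner recognition, the frozen nonterminals of
`GLCT` have no rules, so below `X → α̃ (X/α)` the left corner is a terminal leaf and the node has
depth `1`. A slashed node `Y/α` is empty or expands to `β (Y/X)` for a rule `X → α β`. If `β` is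
nonempty, its first symbol is a terminal or an original nonterminal, giving depth `≤ 2`. If `β`
is empty the rule is unary, so `α` is a terminal, while the child `Y/X` has a nonterminal bottom
and hence depth `≤ 2`. So the leftmost path has at most `3` edges. -/

namespace DTree

theorem WF.mono {G G' : WCFG N T W} (hs : G.rules ⊆ G'.rules) {t : DTree N T W}
    (h : t.WF G) : t.WF G' := by
  induction h with
  | leaf a => exact .leaf a
  | node happ _ ih =>
    obtain ⟨rhs, hr, hl⟩ := happ
    exact .node ⟨rhs, hs hr, hl⟩ ih

end DTree

namespace WCFG

theorem trim_rules_subset (G : WCFG N T W) : G.trim.rules ⊆ G.rules := fun _ hr => hr.1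

end WCFG

section BasicLCT

variable [One W] {G : WCFG N T W}

theorem mem_GLCT_univ_rules {A : LCNT N T} {rhs : List (GSym (LCNT N T) T)} {w : W}
    (hr : (A, rhs, w) ∈ (GLCT G G.rules Set.univ).rules) :
    (∃ X α, A = LCNT.orig X ∧ rhs = [frz α, Sum.inl (LCNT.slash (Sum.inl X) α)]) ∨
    (∃ α, A = LCNT.slash α α ∧ rhs = []) ∨
    (∃ X α β w' Y, (X, α :: β, w') ∈ G.rules ∧ A = LCNT.slash (Sum.inl Y) α ∧
      rhs = β.map emb ++ [Sum.inl (LCNT.slash (Sum.inl Y) (Sum.inl X))]) := by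
  simp only [GLCT, Set.mem_union, Set.mem_ofPred_eq, Prod.mk.injEq] at hr
  rcases hr with ((((⟨_, hX, -⟩ | ⟨X, α, -, hA, hrhs, -⟩) | ⟨α, hA, hrhs, -⟩) |
      ⟨X, α, β, w', Y, hmem, hA, hrhs, -⟩) | ⟨_, _, _, hmem, hnmem, -⟩) | ⟨_, _, _, _, -, hα, -⟩
  · exact absurd (Set.mem_univ _) hX
  · exact .inl ⟨X, α, hA, hrhs⟩
  · exact .inr (.inl ⟨α, hA, hrhs⟩)
  · exact .inr (.inr ⟨X, α, β, w', Y, hmem, hA, hrhs⟩)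
  · exact absurd hmem hnmem
  · exact absurd (Set.mem_univ _) hα

theorem lrDepth_eq_zero_of_label_eq_frz {t : DTree (LCNT N T) T W}
    (ht : t.WF (GLCT G G.rules Set.univ)) {α : GSym N T} (hl : t.label = some (frz α)) :
    t.lrDepth = 0 := by
  cases ht with
  | leaf => rfl
  | @node X _ _ happ _ =>
    obtain ⟨rhs, hr, -⟩ := happ
    rcases α with Z | a <;> simp only [DTree.label, frz, Option.some.injEq, Sum.inl.injEq,
      reduceCtorEq] at hl
    subst hl
    rcases mem_GLCT_univ_rules hr with ⟨_, _, h, -⟩ | ⟨_, h, -⟩ | ⟨_, _, _, _, _, _, h, -⟩ <;>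
      cases h

def lrDepthBound : Option (GSym (LCNT N T) T) → ℕ
  | some (Sum.inl (LCNT.orig _)) => 1
  | some (Sum.inl (LCNT.slash _ (Sum.inl _))) => 2
  | some (Sum.inl (LCNT.slash _ (Sum.inr _))) => 3
  | _ => 0

theorem lrDepthBound_le_three (o : Option (GSym (LCNT N T) T)) : lrDepthBound o ≤ 3 := by
  rcases o with _ | (⟨_ | _ | ⟨_, _ | _⟩⟩ | _) <;> simp [lrDepthBound]

theorem lrDepthBound_emb_le_one (γ : GSym N T) : lrDepthBound (some (emb γ)) ≤ 1 := by
  rcases γ with _ | _ <;> simp [lrDepthBound, emb]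

theorem two_le_lrDepthBound_slash (β α : GSym N T) :
    2 ≤ lrDepthBound (some (Sum.inl (LCNT.slash β α))) := by
  rcases α with _ | _ <;> simp [lrDepthBound]

theorem lrDepth_le_lrDepthBound
    (hunary : ∀ X α w, (X, [α], w) ∈ G.rules → ∃ a : T, α = Sum.inr a)
    {t : DTree (LCNT N T) T W} (ht : t.WF (GLCT G G.rules Set.univ)) :
    t.lrDepth ≤ lrDepthBound t.label := by
  induction ht with
  | leaf => exact Nat.zero_le _
  | @node _ _ ts happ hwf ih =>
    obtain ⟨rhs, hr, hl⟩ := happ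
    rcases mem_GLCT_univ_rules hr with ⟨Y, α, rfl, rfl⟩ | ⟨α, rfl, rfl⟩ |
      ⟨Y, α, β, w', Z, hmem, rfl, rfl⟩
    · rcases ts with _ | ⟨t₁, ts⟩
      · simp at hl
      have h₁ := lrDepth_eq_zero_of_label_eq_frz (hwf t₁ List.mem_cons_self) (List.cons.inj hl).1
      simp [DTree.lrDepth, DTree.label, lrDepthBound, h₁]
    · rw [List.map_nil, List.map_eq_nil_iff] at hl
      subst hl
      exact Nat.zero_le _
    · rcases ts with _ | ⟨t₁, ts⟩
      · simp at hl
      have h₁ := ih t₁ List.mem_cons_self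
      change t₁.lrDepth + 1 ≤ lrDepthBound (some (Sum.inl (LCNT.slash (Sum.inl Z) α)))
      rcases β with _ | ⟨γ, β⟩
      · obtain ⟨a, rfl⟩ := hunary _ _ _ hmem
        rw [(List.cons.inj hl).1] at h₁
        simp only [lrDepthBound] at h₁ ⊢
        omega
      · rw [(List.cons.inj hl).1] at h₁
        have := lrDepthBound_emb_le_one γ
        have := two_le_lrDepthBound_slash (Sum.inl Z) α
        omega

end BasicLCT

theorem basic_LCT_eliminates_left_recursion_general [CommSemiring W]
    (G : WCFG N T W)
    (hshape : ∀ r ∈ G.rules, 2 ≤ r.2.1.length ∨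
        (r.2.1 ≠ [] ∧ ∀ s ∈ r.2.1, ∃ a : T, s = Sum.inr a)) :
    ∃ B : ℕ, ∀ t : DTree (LCNT N T) T W,
      t.WF (GLCT G G.rules Set.univ).trim → t.lrDepth ≤ B := by
  have hunary : ∀ X α w, (X, [α], w) ∈ G.rules → ∃ a : T, α = Sum.inr a := fun _ α _ hr =>
    ((hshape _ hr).resolve_left (by simp)).2 α List.mem_cons_self
  refine ⟨3, fun t ht => ?_⟩
  calc t.lrDepth ≤ lrDepthBound t.label :=
        lrDepth_le_lrDepthBound hunary (ht.mono (WCFG.trim_rules_subset _))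
    _ ≤ 3 := lrDepthBound_le_three _

/-- The basic left-corner transformation (P = R, C = N ∪ Σ) eliminates left
recursion from a grammar with no unary nonterminal rules and no nullary rules. -/
theorem basic_LCT_eliminates_left_recursion [CommSemiring W] [Fintype N] [Fintype T]
    (G : WCFG N T W)
    (hshape : ∀ r ∈ G.rules, 2 ≤ r.2.1.length ∨
        (r.2.1 ≠ [] ∧ ∀ s ∈ r.2.1, ∃ a : T, s = Sum.inr a)) :
    ∃ B : ℕ, ∀ t : DTree (LCNT N T) T W,
      t.WF (GLCT G G.rules Set.univ).trim → t.lrDepth ≤ B :=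
  basic_LCT_eliminates_left_recursion_general G hshape
end

section
/- In the generalized left-corner transformation of a nullary-free grammar, every derivation of the empty string rooted at a slashed nonterminal consists of a chain of unary rules among slashed nonterminals terminated by a single nullary rule X/X → ε: formally, if G has no nullary rules and t is a derivation in GLCT(G, P, C) rooted at some X/Y with yield ε, then every internal node of t is labeled by a slashed nonterminal of the form X/Z, each non-leaf rule application in t is a unary rule X/Z → X/Z' (arising from a unary rule Z' → Z in P), and the unique leaf rule is X/X → ε. -/
variable {N T W : Type}

/-- `EpsChain P x y t` : `t` is a chain of unary slashed rules (with common
numerator `x`, arising from unary rules of `P`) from `x/y` down to the nullary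
rule `x/x → ε`. -/
inductive EpsChain [One W] (P : Set (GRule N T W)) (x : GSym N T) :
    GSym N T → DTree (LCNT N T) T W → Prop
  | base : EpsChain P x x (DTree.node (LCNT.slash x x) 1 [])
  | step {z : GSym N T} {X' : N} {w : W} {t : DTree (LCNT N T) T W} :
      (X', [z], w) ∈ P → EpsChain P x (Sum.inl X') t →
      EpsChain P x z (DTree.node (LCNT.slash x z) w [t])

/-! Since `G` is nullary-free, every GLCT rule whose head is not slashed has a nonempty
right-hand side beginning with an unslashed symbol, so by induction on the leftmost child every
derivation rooted at an unslashed symbol has nonempty yield. Hence in a derivation of `ε` a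
slashed rule `Y/α → β (Y/X)` must have `β = ε`, and the only other slashed rule is
`X/X → ε`. -/

theorem DTree.yield_node_s16 (X : N) (w : W) (ts : List (DTree N T W)) :
    (DTree.node X w ts).yield = (ts.map DTree.yield).flatten := by
  rw [DTree.yield, List.map_attach_eq_pmap, List.pmap_eq_map]

theorem DTree.yield_eq_nil_of_mem {X : N} {w : W} {ts : List (DTree N T W)} {t : DTree N T W}
    (h : (DTree.node X w ts).yield = []) (ht : t ∈ ts) : t.yield = [] := by
  rw [DTree.yield_node_s16, List.flatten_eq_nil_iff] at h
  exact h _ (List.mem_map_of_mem ht)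

theorem DTree.yield_node_cons_ne_nil {X : N} {w : W} {t : DTree N T W}
    {ts : List (DTree N T W)} (ht : t.yield ≠ []) : (DTree.node X w (t :: ts)).yield ≠ [] :=
  fun h => ht (DTree.yield_eq_nil_of_mem h List.mem_cons_self)

def IsSlashSym (s : GSym (LCNT N T) T) : Prop :=
  ∃ x y, s = Sum.inl (LCNT.slash x y)

theorem not_isSlashSym_emb (s : GSym N T) : ¬IsSlashSym (emb s : GSym (LCNT N T) T) := by
  rintro ⟨x, y, h⟩
  cases s <;> simp [emb] at h

theorem not_isSlashSym_frz (s : GSym N T) : ¬IsSlashSym (frz s : GSym (LCNT N T) T) := by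
  rintro ⟨x, y, h⟩
  cases s <;> simp [frz] at h

section GLCT

variable [One W] {G : WCFG N T W} {P : Set (GRule N T W)} {C : Set (GSym N T)}

theorem GLCT_slash_rule_cases {x y : GSym N T} {rhs : List (GSym (LCNT N T) T)} {w : W}
    (h : (LCNT.slash x y, rhs, w) ∈ (GLCT G P C).rules) :
    (x = y ∧ rhs = [] ∧ w = 1) ∨
      ∃ (X Y : N) (β : List (GSym N T)), (X, y :: β, w) ∈ P ∧ x = Sum.inl Y ∧
        rhs = β.map emb ++ [Sum.inl (LCNT.slash x (Sum.inl X))] := by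
  simp only [GLCT, Set.mem_union, Set.mem_ofPred_eq] at h
  rcases h with ((((⟨_, _, h⟩ | ⟨_, _, _, h⟩) | ⟨_, h⟩) | ⟨X, _, β, _, Y, hP, h⟩) |
      ⟨_, _, _, _, _, h⟩) | ⟨_, _, _, _, _, _, h⟩ <;>
    simp only [Prod.mk.injEq, reduceCtorEq, false_and, LCNT.slash.injEq] at h
  · obtain ⟨⟨rfl, rfl⟩, rfl, rfl⟩ := h
    exact Or.inl ⟨rfl, rfl, rfl⟩
  · obtain ⟨⟨rfl, rfl⟩, rfl, rfl⟩ := h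
    exact Or.inr ⟨X, Y, β, hP, rfl, rfl⟩

theorem GLCT_rule_rhs_head_not_slash (hnn : ∀ r ∈ G.rules, r.2.1 ≠ []) {A : LCNT N T}
    {rhs : List (GSym (LCNT N T) T)} {w : W} (h : (A, rhs, w) ∈ (GLCT G P C).rules)
    (hA : ¬IsSlashSym (Sum.inl A : GSym (LCNT N T) T)) :
    ∃ s rest, rhs = s :: rest ∧ ¬IsSlashSym s := by
  simp only [GLCT, Set.mem_union, Set.mem_ofPred_eq] at h
  rcases h with ((((⟨X, _, h⟩ | ⟨X, α, _, h⟩) | ⟨α, h⟩) | ⟨_, _, _, _, _, _, h⟩) |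
      ⟨_, _, _, hR, _, h⟩) | ⟨_, α, _, _, _, _, h⟩ <;> cases h
  · exact ⟨_, _, rfl, not_isSlashSym_frz (Sum.inl X)⟩
  · exact ⟨_, _, rfl, not_isSlashSym_frz α⟩
  · exact absurd ⟨α, α, rfl⟩ hA
  · exact absurd ⟨_, _, rfl⟩ hA
  · obtain ⟨a, rest, rfl⟩ := List.exists_cons_of_ne_nil (hnn _ hR)
    exact ⟨_, _, rfl, not_isSlashSym_emb a⟩
  · exact ⟨_, _, rfl, not_isSlashSym_frz α⟩

theorem DTree.WF.yield_ne_nil_of_not_slash (hnn : ∀ r ∈ G.rules, r.2.1 ≠ [])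
    {t : DTree (LCNT N T) T W} (hwf : t.WF (GLCT G P C)) {s : GSym (LCNT N T) T}
    (hs : t.label = some s) (hns : ¬IsSlashSym s) : t.yield ≠ [] := by
  induction hwf generalizing s with
  | leaf a => simp [DTree.yield]
  | node hra _ ih =>
    obtain ⟨rhs, hr, hmap⟩ := hra
    simp only [DTree.label, Option.some.injEq] at hs
    subst hs
    obtain ⟨s, rest, rfl, hs⟩ := GLCT_rule_rhs_head_not_slash hnn hr hns
    obtain ⟨t, ts, rfl, ht, -⟩ := List.map_eq_cons_iff.mp hmap
    exact DTree.yield_node_cons_ne_nil (ih t List.mem_cons_self ht hs)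

end GLCT

theorem GLCT_eps_derivations_are_chains_general [CommSemiring W]
    (G : WCFG N T W) (P : Set (GRule N T W)) (C : Set (GSym N T))
    (hnn : ∀ r ∈ G.rules, r.2.1 ≠ [])
    (x y : GSym N T) (t : DTree (LCNT N T) T W)
    (hwf : t.WF (GLCT G P C))
    (hlab : t.label = some (Sum.inl (LCNT.slash x y)))
    (hyield : t.yield = ([] : List T)) :
    EpsChain P x y t := by
  induction hwf generalizing x y with
  | leaf a => simp [DTree.label] at hlab
  | node hra hch ih =>
    obtain ⟨rhs, hr, hmap⟩ := hra
    simp only [DTree.label, Option.some.injEq, Sum.inl.injEq] at hlab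
    subst hlab
    rcases GLCT_slash_rule_cases hr with ⟨rfl, rfl, rfl⟩ | ⟨X, Y, β, hP, rfl, rfl⟩
    · rw [List.map_nil, List.map_eq_nil_iff] at hmap
      subst hmap
      exact .base
    · cases β with
      | cons b β =>
        simp only [List.map_cons, List.cons_append] at hmap
        obtain ⟨t, ts, rfl, ht, -⟩ := List.map_eq_cons_iff.mp hmap
        exact absurd (DTree.yield_eq_nil_of_mem hyield List.mem_cons_self) <|
          (hch t List.mem_cons_self).yield_ne_nil_of_not_slash hnn ht (not_isSlashSym_emb b)
      | nil =>
        simp only [List.map_nil, List.nil_append, List.map_cons] at hmap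
        obtain ⟨t, rfl, ht⟩ := List.map_eq_singleton_iff.mp hmap
        exact .step hP <|
          ih t List.mem_cons_self _ _ ht (DTree.yield_eq_nil_of_mem hyield List.mem_cons_self)

/-- In GLCT of a nullary-free grammar, every derivation of ε rooted at a
slashed nonterminal is a chain of unary slashed rules ending in `x/x → ε`. -/
theorem GLCT_eps_derivations_are_chains [CommSemiring W]
    (G : WCFG N T W) (P : Set (GRule N T W)) (C : Set (GSym N T))
    (hP : P ⊆ G.rules) (hnn : ∀ r ∈ G.rules, r.2.1 ≠ [])
    (x y : GSym N T) (t : DTree (LCNT N T) T W)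
    (hwf : t.WF (GLCT G P C))
    (hlab : t.label = some (Sum.inl (LCNT.slash x y)))
    (hyield : t.yield = ([] : List T)) :
    EpsChain P x y t :=
  GLCT_eps_derivations_are_chains_general G P C hnn x y t hwf hlab hyield
end
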